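/- arXiv:2308.02480 — 3 statements merged into one kernel-verified Lean document; each statement's English description precedes it below -/
import Mathlib

section
/- Let M̂ = M + E with M, E symmetric n×n matrices, where M = U Λ U^T has rank r with U ∈ ℝ^{n×r} having orthonormal columns and U_⊥ ∈ ℝ^{n×(n−r)} an orthonormal basis of the orthogonal complement of the column space of U (so M U_⊥ = 0). Let û_j be an eigenvector of M̂ with eigenvalue λ̂_j, and suppose λ̂_j I_{n−r} − U_⊥^T E U_⊥ is invertible. Then û_j^T U_⊥ = û_j^T U U^T E U_⊥ (λ̂_j I_{n−r} − U_⊥^T E U_⊥)^{−1}. -/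
open Matrix

/-- Null-space identity: `û_j^T U_⊥ = û_j^T U U^T E U_⊥ (λ̂_j I − U_⊥^T E U_⊥)^{−1}`. -/
theorem stmt_4 {n r s : ℕ} (M E : Matrix (Fin n) (Fin n) ℝ)
    (hM : M.IsSymm) (hE : E.IsSymm)
    (U : Matrix (Fin n) (Fin r) ℝ) (Lam : Matrix (Fin r) (Fin r) ℝ) (hLam : Lam.IsDiag)
    (Uperp : Matrix (Fin n) (Fin s) ℝ)
    (hMdecomp : M = U * Lam * Uᵀ)
    (hUU : Uᵀ * U = 1) (hUpUp : Uperpᵀ * Uperp = 1)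
    (hUUp : Uᵀ * Uperp = 0)
    (hcomplete : U * Uᵀ + Uperp * Uperpᵀ = 1)
    (uhat : Fin n → ℝ) (lamhat : ℝ)
    (huhat : (M + E).mulVec uhat = lamhat • uhat)
    (hinv : IsUnit (lamhat • (1 : Matrix (Fin s) (Fin s) ℝ) - Uperpᵀ * E * Uperp)) :
    uhat ᵥ* Uperp
      = uhat ᵥ* (U * Uᵀ * E * Uperp
          * (lamhat • (1 : Matrix (Fin s) (Fin s) ℝ) - Uperpᵀ * E * Uperp)⁻¹) := by
  set A : Matrix (Fin s) (Fin s) ℝ :=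
    lamhat • (1 : Matrix (Fin s) (Fin s) ℝ) - Uperpᵀ * E * Uperp with hA
  have hAinv : A * A⁻¹ = 1 :=
    Matrix.mul_nonsing_inv A ((Matrix.isUnit_iff_isUnit_det A).mp hinv)
  have hMU : M * Uperp = 0 := by
    rw [hMdecomp, Matrix.mul_assoc, hUUp, Matrix.mul_zero]
  have hsym : (M + E)ᵀ = M + E := by
    rw [Matrix.transpose_add, hM.eq, hE.eq]
  have hvm : uhat ᵥ* (M + E) = lamhat • uhat := by
    rw [← hsym, Matrix.vecMul_transpose, huhat]
  have h1 : lamhat • (uhat ᵥ* Uperp) = uhat ᵥ* (E * Uperp) := by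
    rw [← Matrix.smul_vecMul, ← hvm, Matrix.vecMul_vecMul, Matrix.add_mul, hMU, zero_add]
  have h2 : E * Uperp = U * Uᵀ * E * Uperp + Uperp * (Uperpᵀ * E * Uperp) := by
    have := congrArg (· * (E * Uperp)) hcomplete
    simp only [Matrix.add_mul, Matrix.one_mul, Matrix.mul_assoc] at this ⊢
    exact this.symm
  have hsmul : (uhat ᵥ* Uperp) ᵥ* (lamhat • (1 : Matrix (Fin s) (Fin s) ℝ))
      = lamhat • (uhat ᵥ* Uperp) := by
    ext i
    simp [Matrix.vecMul, dotProduct, Matrix.one_apply, mul_comm]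
  have key : (uhat ᵥ* Uperp) ᵥ* A = uhat ᵥ* (U * Uᵀ * E * Uperp) := by
    have h3 : uhat ᵥ* (Uperp * (Uperpᵀ * E * Uperp))
        = (uhat ᵥ* Uperp) ᵥ* (Uperpᵀ * E * Uperp) :=
      (Matrix.vecMul_vecMul uhat Uperp (Uperpᵀ * E * Uperp)).symm
    rw [hA, Matrix.vecMul_sub, hsmul, h1, h2, Matrix.vecMul_add, h3]
    abel
  calc uhat ᵥ* Uperp = (uhat ᵥ* Uperp) ᵥ* (A * A⁻¹) := by
        rw [hAinv, Matrix.vecMul_one]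
    _ = uhat ᵥ* (U * Uᵀ * E * Uperp * A⁻¹) := by
        rw [← Matrix.vecMul_vecMul, key, Matrix.vecMul_vecMul]
end

section
/- In the setting of the null-space identity: let M̂ = M + E be symmetric with M = UΛU^T of rank r, [U, U_⊥] orthogonal, M̂ û_j = λ̂_j û_j with û_j a unit vector, and suppose |λ_j| > 3‖E‖_op where λ_j is the j-th eigenvalue of M and |λ̂_j| ≥ |λ_j| − ‖E‖_op. Then λ̂_j I_{n−r} − U_⊥^T E U_⊥ is invertible, every eigenvalue of λ̂_j I_{n−r} − U_⊥^T E U_⊥ has absolute value at least |λ_j|/3, and consequently ‖û_j^T U_⊥‖ ≤ 3‖E‖_op/|λ_j|. -/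
/-!
Since `U_⊥ᵀ U = 0`, the projection `U_⊥ᵀ` kills `M`, so applying it to `(M + E) û = λ̂ û` gives
`λ̂ U_⊥ᵀ û = U_⊥ᵀ E û`, whence `|λ̂| ‖U_⊥ᵀ û‖ ≤ ‖E‖` with `|λ̂| ≥ |λ_j| - ‖E‖ > 2|λ_j|/3`.
For the spectral bound, `σ(λ̂ - B) = λ̂ - σ(B)` with `B = U_⊥ᵀ E U_⊥`, and `‖B‖ ≤ ‖E‖` because
`U_⊥` is an isometry, so every spectral value has modulus at least `|λ̂| - ‖E‖ ≥ |λ_j| - 2‖E‖`.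
-/

open Matrix
open scoped Matrix.Norms.L2Operator

lemma spectrum.norm_sub_le_of_mem_smul_one_sub {𝕜 A : Type*} [NontriviallyNormedField 𝕜]
    [NormedRing A] [NormedAlgebra 𝕜 A] [CompleteSpace A] {a : A} {c μ : 𝕜}
    (hμ : μ ∈ spectrum 𝕜 (c • 1 - a)) : ‖c‖ - ‖a‖ * ‖(1 : A)‖ ≤ ‖μ‖ := by
  rw [← Algebra.algebraMap_eq_smul_one, ← spectrum.singleton_sub_eq] at hμ
  obtain ⟨x, hx, ν, hν, rfl⟩ := hμ
  rw [Set.mem_singleton_iff.mp hx]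
  have hν' := spectrum.subset_closedBall_norm_mul a hν
  rw [mem_closedBall_zero_iff] at hν'
  linarith [norm_sub_norm_le c ν]

lemma EuclideanSpace.norm_toLp_eq_sqrt_dotProduct {ι : Type*} [Fintype ι] (x : ι → ℝ) :
    ‖(WithLp.equiv 2 (ι → ℝ)).symm x‖ = √(x ⬝ᵥ x) := by
  simp [EuclideanSpace.norm_eq, dotProduct, sq]

namespace Matrix

variable {𝕜 : Type*} [RCLike 𝕜] {m n : Type*} [Fintype m] [Fintype n] [DecidableEq n]

-- `‖1‖` is `0`, not `1`, when `n` is empty.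
lemma l2_opNorm_one_le : ‖(1 : Matrix n n 𝕜)‖ ≤ 1 := by
  have h : ‖(1 : Matrix n n 𝕜)‖ * ‖(1 : Matrix n n 𝕜)‖ = ‖(1 : Matrix n n 𝕜)‖ := by
    rw [← l2_opNorm_conjTranspose_mul_self, conjTranspose_one, one_mul]
  nlinarith [norm_nonneg (1 : Matrix n n 𝕜)]

lemma l2_opNorm_le_one_of_conjTranspose_mul_self_eq_one {V : Matrix m n 𝕜}
    (hV : Vᴴ * V = 1) : ‖V‖ ≤ 1 := by
  have h : ‖V‖ * ‖V‖ ≤ 1 := by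
    rw [← l2_opNorm_conjTranspose_mul_self, hV]
    exact l2_opNorm_one_le
  nlinarith [norm_nonneg V]

lemma l2_opNorm_conjTranspose_mul_mul_self_le [DecidableEq m] {V : Matrix m n 𝕜}
    (hV : Vᴴ * V = 1) (A : Matrix m m 𝕜) : ‖Vᴴ * A * V‖ ≤ ‖A‖ := by
  have hV' : ‖V‖ ≤ 1 := l2_opNorm_le_one_of_conjTranspose_mul_self_eq_one hV
  have hVH : ‖Vᴴ‖ ≤ 1 := (l2_opNorm_conjTranspose V).trans_le hV'
  calc ‖Vᴴ * A * V‖ ≤ ‖Vᴴ‖ * ‖A‖ * ‖V‖ :=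
        (l2_opNorm_mul _ _).trans (mul_le_mul_of_nonneg_right (l2_opNorm_mul _ _) (norm_nonneg _))
    _ ≤ 1 * ‖A‖ * 1 := by gcongr
    _ = ‖A‖ := by ring

lemma norm_mul_norm_mulVec_le_of_mul_eq_zero {P : Matrix m n 𝕜} {M E : Matrix n n 𝕜}
    (hPM : P * M = 0) {u : n → 𝕜} {c : 𝕜} (hu : (M + E) *ᵥ u = c • u) :
    ‖c‖ * ‖(WithLp.equiv 2 (m → 𝕜)).symm (P *ᵥ u)‖
      ≤ ‖P * E‖ * ‖(WithLp.equiv 2 (n → 𝕜)).symm u‖ := by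
  have h : c • (P *ᵥ u) = (P * E) *ᵥ u := by
    rw [← mulVec_smul, ← hu, mulVec_mulVec, Matrix.mul_add, hPM, zero_add]
  rw [← norm_smul, ← WithLp.toLp_smul]
  exact h ▸ l2_opNorm_mulVec (P * E) ((WithLp.equiv 2 (n → 𝕜)).symm u)

end Matrix

theorem stmt_5_general {n r s : ℕ} (M E : Matrix (Fin n) (Fin n) ℝ)
    (U : Matrix (Fin n) (Fin r) ℝ) (Lam : Matrix (Fin r) (Fin r) ℝ)
    (Uperp : Matrix (Fin n) (Fin s) ℝ)
    (hMdecomp : M = U * Lam * Uᵀ)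
    (hUpUp : Uperpᵀ * Uperp = 1) (hUUp : Uᵀ * Uperp = 0)
    (uhat : Fin n → ℝ) (lamhat lamj : ℝ)
    (hunit : uhat ⬝ᵥ uhat = 1)
    (huhat : (M + E).mulVec uhat = lamhat • uhat)
    (hgap : 3 * ‖E‖ < |lamj|)
    (hweyl : |lamj| - ‖E‖ ≤ |lamhat|) :
    IsUnit (lamhat • (1 : Matrix (Fin s) (Fin s) ℝ) - Uperpᵀ * E * Uperp)
    ∧ (∀ μ ∈ spectrum ℝ (lamhat • (1 : Matrix (Fin s) (Fin s) ℝ) - Uperpᵀ * E * Uperp),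
        |lamj| / 3 ≤ |μ|)
    ∧ ‖(WithLp.equiv 2 (Fin s → ℝ)).symm (uhat ᵥ* Uperp)‖ ≤ 3 * ‖E‖ / |lamj| := by
  rw [← conjTranspose_eq_transpose_of_trivial] at hUpUp
  have hE : 0 ≤ ‖E‖ := norm_nonneg E
  have hB : ‖Uperpᵀ * E * Uperp‖ ≤ ‖E‖ := by
    simpa only [conjTranspose_eq_transpose_of_trivial] using
      l2_opNorm_conjTranspose_mul_mul_self_le hUpUp E
  have hspec : ∀ μ ∈ spectrum ℝ (lamhat • (1 : Matrix (Fin s) (Fin s) ℝ) - Uperpᵀ * E * Uperp),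
      |lamj| / 3 ≤ |μ| := by
    intro μ hμ
    have hμ' := spectrum.norm_sub_le_of_mem_smul_one_sub hμ
    have hB1 : ‖Uperpᵀ * E * Uperp‖ * ‖(1 : Matrix (Fin s) (Fin s) ℝ)‖ ≤ ‖E‖ :=
      (mul_le_of_le_one_right (norm_nonneg _) l2_opNorm_one_le).trans hB
    simp only [Real.norm_eq_abs] at hμ'
    linarith
  refine ⟨(spectrum.zero_notMem_iff ℝ).mp fun h0 ↦ ?_, hspec, ?_⟩
  · linarith [abs_zero (α := ℝ) ▸ hspec 0 h0]
  have hPM : Uperpᵀ * M = 0 := by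
    rw [hMdecomp, ← Matrix.mul_assoc, ← Matrix.mul_assoc, ← transpose_transpose U,
      ← transpose_mul, hUUp, transpose_zero, Matrix.zero_mul, Matrix.zero_mul]
  have hPE : ‖Uperpᵀ * E‖ ≤ ‖E‖ := by
    refine (l2_opNorm_mul _ _).trans (mul_le_of_le_one_left hE ?_)
    rw [← conjTranspose_eq_transpose_of_trivial, l2_opNorm_conjTranspose]
    exact l2_opNorm_le_one_of_conjTranspose_mul_self_eq_one hUpUp
  have key := norm_mul_norm_mulVec_le_of_mul_eq_zero hPM huhat
  rw [EuclideanSpace.norm_toLp_eq_sqrt_dotProduct uhat, hunit, Real.sqrt_one, mul_one,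
    Real.norm_eq_abs, mulVec_transpose] at key
  set w := ‖(WithLp.equiv 2 (Fin s → ℝ)).symm (uhat ᵥ* Uperp)‖
  have hlamhat : 2 * |lamj| / 3 ≤ |lamhat| := by linarith
  rw [le_div_iff₀ (by linarith)]
  nlinarith [mul_le_mul_of_nonneg_right hlamhat (norm_nonneg _ : 0 ≤ w)]

/-- Invertibility, spectral lower bound and Davis–Kahan-type bound under `|λ_j| > 3‖E‖`. -/
theorem stmt_5 {n r s : ℕ} (M E : Matrix (Fin n) (Fin n) ℝ)
    (hM : M.IsSymm) (hE : E.IsSymm)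
    (U : Matrix (Fin n) (Fin r) ℝ) (Lam : Matrix (Fin r) (Fin r) ℝ) (hLam : Lam.IsDiag)
    (Uperp : Matrix (Fin n) (Fin s) ℝ)
    (hMdecomp : M = U * Lam * Uᵀ)
    (hUU : Uᵀ * U = 1) (hUpUp : Uperpᵀ * Uperp = 1) (hUUp : Uᵀ * Uperp = 0)
    (hcomplete : U * Uᵀ + Uperp * Uperpᵀ = 1)
    (uhat : Fin n → ℝ) (lamhat lamj : ℝ)
    (hunit : uhat ⬝ᵥ uhat = 1)
    (huhat : (M + E).mulVec uhat = lamhat • uhat)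
    (hspec : lamj ∈ spectrum ℝ M)
    (hgap : 3 * ‖E‖ < |lamj|)
    (hweyl : |lamj| - ‖E‖ ≤ |lamhat|) :
    IsUnit (lamhat • (1 : Matrix (Fin s) (Fin s) ℝ) - Uperpᵀ * E * Uperp)
    ∧ (∀ μ ∈ spectrum ℝ (lamhat • (1 : Matrix (Fin s) (Fin s) ℝ) - Uperpᵀ * E * Uperp),
        |lamj| / 3 ≤ |μ|)
    ∧ ‖(WithLp.equiv 2 (Fin s → ℝ)).symm (uhat ᵥ* Uperp)‖ ≤ 3 * ‖E‖ / |lamj| :=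
  stmt_5_general M E U Lam Uperp hMdecomp hUpUp hUUp uhat lamhat lamj hunit huhat hgap hweyl
end

section
/- Let λ̂_j > 0, let λ_1^⊥ ≥ ⋯ ≥ λ_{n−r}^⊥ and λ̂_1 ≥ ⋯ ≥ λ̂_n be real numbers satisfying the interlacing λ̂_{k+r} ≤ λ_k^⊥ ≤ λ̂_k for all 1 ≤ k ≤ n−r, and suppose λ̂_j > λ̂_k for all k ≥ r+1 and λ̂_j > λ_k^⊥ for all k. Then | Σ_{k=1}^{n−r} σ²/(λ̂_j − λ_k^⊥) − Σ_{k=r+1}^{n} σ²/(λ̂_j − λ̂_k) | ≤ Σ_{k=1}^{r} σ²/(λ̂_j − λ_k^⊥), for any σ² ≥ 0. -/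
/-!
The compressed sum `∑ₖ f k` with `f k = σ²/(λ̂ⱼ - λₖ^⊥)` is squeezed between two sums over the
tail `k ≥ r` of the full spectrum, `g k = σ²/(λ̂ⱼ - λ̂ₖ)`. Since `x ↦ σ²/(λ̂ⱼ - x)` is monotone below
`λ̂ⱼ`, the left half of the interlacing gives `g (k + r) ≤ f k`, so the whole tail of `g` is at most
`∑ f`; the right half gives `f k ≤ g k`, so the part `k ≥ r` of `∑ f` is at most the tail of `g`.
The discrepancy is therefore at most the remaining terms `k < r` of `∑ f`.
-/

open Finset

theorem Finset.sum_le_sum_of_injOn {ι κ M : Type*} [AddCommMonoid M] [PartialOrder M]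
    [IsOrderedAddMonoid M] {s : Finset ι} {t : Finset κ} {f : ι → M} {g : κ → M} (e : ι → κ)
    (he : Set.InjOn e s) (hest : Set.MapsTo e s t) (hg : ∀ j ∈ t, j ∉ e '' s → 0 ≤ g j)
    (h : ∀ i ∈ s, f i ≤ g (e i)) :
    ∑ i ∈ s, f i ≤ ∑ j ∈ t, g j := by
  classical
  calc ∑ i ∈ s, f i ≤ ∑ i ∈ s, g (e i) := sum_le_sum h
    _ = ∑ j ∈ s.image e, g j := (sum_image he).symm
    _ ≤ ∑ j ∈ t, g j :=
      sum_le_sum_of_subset_of_nonneg (image_subset_iff.2 hest) fun j hj hjs ↦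
        hg j hj (by simpa using hjs)

theorem Fin.sum_filter_le_eq_sum_addNat {M : Type*} [AddCommMonoid M] {m r : ℕ}
    (g : Fin (m + r) → M) :
    ∑ k ∈ univ.filter (fun k : Fin (m + r) ↦ r ≤ (k : ℕ)), g k = ∑ i : Fin m, g (i.addNat r) := by
  refine (sum_nbij (·.addNat r) (by simp) (fun i _ j _ h ↦ by simpa using h) ?_ (by simp)).symm
  intro k hk
  have hrk : r ≤ (k : ℕ) := (mem_filter.1 hk).2
  exact ⟨⟨k - r, by omega⟩, mem_univ _, Fin.ext (by simp only [Fin.addNat_mk]; omega)⟩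

theorem abs_sum_sub_sum_filter_le_of_interlace {m r : ℕ} (f : Fin m → ℝ) (g : Fin (m + r) → ℝ)
    (hf : ∀ k, 0 ≤ f k) (hg : ∀ k : Fin (m + r), r ≤ (k : ℕ) → 0 ≤ g k)
    (hshift : ∀ k, g (k.addNat r) ≤ f k)
    (hle : ∀ k : Fin m, r ≤ (k : ℕ) → f k ≤ g (k.castAdd r)) :
    |∑ k, f k - ∑ k ∈ univ.filter (fun k : Fin (m + r) ↦ r ≤ (k : ℕ)), g k|
      ≤ ∑ k ∈ univ.filter (fun k : Fin m ↦ (k : ℕ) < r), f k := by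
  have htail_le : ∑ k ∈ univ.filter (fun k : Fin (m + r) ↦ r ≤ (k : ℕ)), g k ≤ ∑ k, f k := by
    rw [Fin.sum_filter_le_eq_sum_addNat]
    exact sum_le_sum fun k _ ↦ hshift k
  have hhead_nonneg : 0 ≤ ∑ k ∈ univ.filter (fun k : Fin m ↦ (k : ℕ) < r), f k :=
    sum_nonneg fun k _ ↦ hf k
  have hsplit : ∑ k, f k = ∑ k ∈ univ.filter (fun k : Fin m ↦ (k : ℕ) < r), f k
      + ∑ k ∈ univ.filter (fun k : Fin m ↦ r ≤ (k : ℕ)), f k := by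
    simpa only [not_lt] using
      (sum_filter_add_sum_filter_not univ (fun k : Fin m ↦ (k : ℕ) < r) f).symm
  have hrest_le : ∑ k ∈ univ.filter (fun k : Fin m ↦ r ≤ (k : ℕ)), f k
      ≤ ∑ k ∈ univ.filter (fun k : Fin (m + r) ↦ r ≤ (k : ℕ)), g k :=
    sum_le_sum_of_injOn (Fin.castAdd r) (Fin.castAdd_injective m r).injOn
      (fun k hk ↦ by simpa using hk) (fun j hj _ ↦ hg j (mem_filter.1 hj).2)
      (fun k hk ↦ hle k (mem_filter.1 hk).2)
  rw [abs_sub_le_iff]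
  constructor <;> linarith

/-- Comparison of reciprocal sums under interlacing. -/
theorem stmt_8 {n r m : ℕ} (hnm : m + r = n)
    (σ2 : ℝ) (hσ2 : 0 ≤ σ2)
    (lamj : ℝ)
    (lamhat : Fin n → ℝ) (lamperp : Fin m → ℝ)
    (hinter : ∀ k : Fin m,
      lamhat ⟨(k : ℕ) + r, by have := k.isLt; omega⟩ ≤ lamperp k
      ∧ lamperp k ≤ lamhat ⟨(k : ℕ), by have := k.isLt; omega⟩)
    (hgap1 : ∀ k : Fin n, r ≤ (k : ℕ) → lamhat k < lamj)
    (hgap2 : ∀ k : Fin m, lamperp k < lamj) :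
    |(∑ k : Fin m, σ2 / (lamj - lamperp k))
        - ∑ k ∈ Finset.univ.filter (fun k : Fin n => r ≤ (k : ℕ)), σ2 / (lamj - lamhat k)|
      ≤ ∑ k ∈ Finset.univ.filter (fun k : Fin m => (k : ℕ) < r), σ2 / (lamj - lamperp k) := by
  subst hnm
  have hnonneg : ∀ x < lamj, 0 ≤ σ2 / (lamj - x) := fun x hx ↦ div_nonneg hσ2 (sub_nonneg.2 hx.le)
  have hmono : ∀ x y, x ≤ y → y < lamj → σ2 / (lamj - x) ≤ σ2 / (lamj - y) := fun x y hxy hy ↦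
    div_le_div_of_nonneg_left hσ2 (sub_pos.2 hy) (sub_le_sub_left hxy _)
  exact abs_sum_sub_sum_filter_le_of_interlace _ _ (fun k ↦ hnonneg _ (hgap2 k))
    (fun k hk ↦ hnonneg _ (hgap1 k hk)) (fun k ↦ hmono _ _ (hinter k).1 (hgap2 k))
    (fun k hk ↦ hmono _ _ (hinter k).2 (hgap1 _ hk))
end
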